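/- Let S be a monoid and let A be an S-act whose unique decomposition into indecomposable subacts is A = ⨆_{i∈I} A_i with I infinite, such that A_i ≇ A_j for every pair of distinct indices i, j ∈ I. Then A is cancellable. -/
import Mathlib


universe u v w

/-- A right `S`-act structure on a type `A`: a map `A × S → A`, `(a, s) ↦ a · s`,
with `a · 1 = a` and `a · (s*t) = (a · s) · t`. (`S`-acts are additionally required
to be nonempty; this is imposed via `Nonempty` hypotheses.) -/
class RAct (S : Type u) [Monoid S] (A : Type v) : Type (max u v) where
  act : A → S → A
  act_one : ∀ a : A, act a 1 = a
  act_mul : ∀ (a : A) (s t : S), act a (s * t) = act (act a s) t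

/-- Isomorphism of `S`-acts: a bijective action-preserving map. -/
def ActIso (S : Type u) [Monoid S] (A : Type v) (B : Type w) [RAct S A] [RAct S B] : Prop :=
  ∃ e : A ≃ B, ∀ (a : A) (s : S), e (RAct.act a s) = RAct.act (e a) s

/-- The coproduct (disjoint union) of two `S`-acts, with componentwise action. -/
instance sumRAct (S : Type u) [Monoid S] (A : Type v) (B : Type w) [RAct S A] [RAct S B] :
    RAct S (A ⊕ B) where
  act x s := Sum.map (fun a => RAct.act a s) (fun b => RAct.act b s) x
  act_one := by rintro (a | b) <;> simp [RAct.act_one]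
  act_mul := by rintro (a | b) s t <;> simp [RAct.act_mul]

/-- An `S`-act `A` is cancellable if `A ⊔ B ≅ A ⊔ C` implies `B ≅ C`
for all `S`-acts `B`, `C`. -/
def Cancellable (S : Type u) [Monoid S] (A : Type u) [RAct S A] : Prop :=
  ∀ (B C : Type u) [RAct S B] [RAct S C] [Nonempty B] [Nonempty C],
    ActIso S (A ⊕ B) (A ⊕ C) → ActIso S B C

/-- A subact of an `S`-act: a nonempty subset closed under the action. -/
def IsSubact (S : Type u) [Monoid S] {A : Type v} [RAct S A] (T : Set A) : Prop :=
  T.Nonempty ∧ ∀ a ∈ T, ∀ s : S, RAct.act a s ∈ T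

/-- The induced `S`-act structure on a subact. -/
def IsSubact.ract {S : Type u} [Monoid S] {A : Type v} [RAct S A] {T : Set A}
    (hT : IsSubact S T) : RAct S T where
  act a s := ⟨RAct.act a.1 s, hT.2 a.1 a.2 s⟩
  act_one a := Subtype.ext (RAct.act_one a.1)
  act_mul a s t := Subtype.ext (RAct.act_mul a.1 s t)

/-- Two subacts are isomorphic if they are isomorphic as `S`-acts with the
induced actions. -/
def SubactIso {S : Type u} [Monoid S] {A : Type v} {A' : Type w} [RAct S A] [RAct S A']
    {T : Set A} {U : Set A'} (hT : IsSubact S T) (hU : IsSubact S U) : Prop :=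
  @ActIso S _ T U hT.ract hU.ract

/-- A subact `T` is indecomposable if it is not the disjoint union of two subacts. -/
def IndecompSubact (S : Type u) [Monoid S] {A : Type v} [RAct S A] (T : Set A) : Prop :=
  IsSubact S T ∧
    ¬ ∃ U V : Set A, IsSubact S U ∧ IsSubact S V ∧ U ∪ V = T ∧ U ∩ V = ∅

section ConnAux

variable {S : Type u} [Monoid S]

/-- The connectedness relation on an `S`-act: the equivalence relation generated by
`a ~ a · s`. Its classes are the indecomposable components. -/
def Conn (S : Type u) [Monoid S] {A : Type v} [RAct S A] (x y : A) : Prop :=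
  Relation.EqvGen (fun a b => ∃ s : S, RAct.act a s = b) x y

lemma conn_refl {A : Type v} [RAct S A] (a : A) : Conn S a a :=
  Relation.EqvGen.refl a

lemma conn_symm {A : Type v} [RAct S A] {a b : A} (h : Conn S a b) : Conn S b a :=
  Relation.EqvGen.symm _ _ h

lemma conn_trans {A : Type v} [RAct S A] {a b c : A} (h : Conn S a b) (h' : Conn S b c) :
    Conn S a c :=
  Relation.EqvGen.trans _ _ _ h h'

lemma conn_act {A : Type v} [RAct S A] (a : A) (s : S) : Conn S a (RAct.act a s) :=
  Relation.EqvGen.rel _ _ ⟨s, rfl⟩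

/-- Morphisms preserve connectedness. -/
lemma conn_map {A : Type v} {B : Type w} [RAct S A] [RAct S B] (f : A → B)
    (hf : ∀ (a : A) (s : S), f (RAct.act a s) = RAct.act (f a) s)
    {x y : A} (h : Conn S x y) : Conn S (f x) (f y) := by
  induction h with
  | rel x y hxy =>
    obtain ⟨s, rfl⟩ := hxy
    rw [hf]
    exact conn_act _ _
  | refl x => exact conn_refl _
  | symm x y _ ih => exact conn_symm ih
  | trans x y z _ _ ih1 ih2 => exact conn_trans ih1 ih2

lemma act_inl {A : Type v} {B : Type w} [RAct S A] [RAct S B] (a : A) (s : S) :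
    RAct.act (Sum.inl a : A ⊕ B) s = Sum.inl (RAct.act a s) := rfl

lemma act_inr {A : Type v} {B : Type w} [RAct S A] [RAct S B] (b : B) (s : S) :
    RAct.act (Sum.inr b : A ⊕ B) s = Sum.inr (RAct.act b s) := rfl

lemma conn_inl {A : Type v} {B : Type w} [RAct S A] [RAct S B] {a a' : A}
    (h : Conn S a a') : Conn S (Sum.inl a : A ⊕ B) (Sum.inl a') :=
  conn_map Sum.inl (fun _ _ => rfl) h

lemma conn_inr {A : Type v} {B : Type w} [RAct S A] [RAct S B] {b b' : B}
    (h : Conn S b b') : Conn S (Sum.inr b : A ⊕ B) (Sum.inr b') :=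
  conn_map Sum.inr (fun _ _ => rfl) h

/-- Connectedness in a coproduct does not mix the two summands. -/
lemma conn_sum {A : Type v} {B : Type w} [RAct S A] [RAct S B] {x y : A ⊕ B}
    (h : Conn S x y) :
    (∃ a a', x = Sum.inl a ∧ y = Sum.inl a' ∧ Conn S a a') ∨
    (∃ b b', x = Sum.inr b ∧ y = Sum.inr b' ∧ Conn S b b') := by
  induction h with
  | rel x y hxy =>
    obtain ⟨s, rfl⟩ := hxy
    cases x with
    | inl a => exact Or.inl ⟨a, _, rfl, act_inl a s, conn_act a s⟩
    | inr b => exact Or.inr ⟨b, _, rfl, act_inr b s, conn_act b s⟩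
  | refl x =>
    cases x with
    | inl a => exact Or.inl ⟨a, a, rfl, rfl, conn_refl a⟩
    | inr b => exact Or.inr ⟨b, b, rfl, rfl, conn_refl b⟩
  | symm x y _ ih =>
    rcases ih with ⟨a, a', rfl, rfl, h⟩ | ⟨b, b', rfl, rfl, h⟩
    · exact Or.inl ⟨a', a, rfl, rfl, conn_symm h⟩
    · exact Or.inr ⟨b', b, rfl, rfl, conn_symm h⟩
  | trans x y z _ _ ih1 ih2 =>
    rcases ih1 with ⟨a, a', rfl, rfl, h1⟩ | ⟨b, b', rfl, rfl, h1⟩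
    · rcases ih2 with ⟨c, c', hc, rfl, h2⟩ | ⟨d, d', hd, rfl, h2⟩
      · obtain rfl : a' = c := Sum.inl.inj hc
        exact Or.inl ⟨a, c', rfl, rfl, conn_trans h1 h2⟩
      · exact absurd hd (by simp)
    · rcases ih2 with ⟨c, c', hc, rfl, h2⟩ | ⟨d, d', hd, rfl, h2⟩
      · exact absurd hc (by simp)
      · obtain rfl : b' = d := Sum.inr.inj hd
        exact Or.inr ⟨b, d', rfl, rfl, conn_trans h1 h2⟩

variable {A : Type v} [RAct S A] {I : Type w} {T : I → Set A}

/-- Connected elements lie in the same block of a subact partition. -/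
lemma conn_mem (hsub : ∀ i, IsSubact S (T i))
    (hdisj : ∀ i j, i ≠ j → T i ∩ T j = ∅)
    (hcover : (⋃ i, T i) = Set.univ)
    {a a' : A} (h : Conn S a a') {i : I} (ha : a ∈ T i) : a' ∈ T i := by
  have key : ∀ x y : A, Conn S x y → ∀ j, (x ∈ T j ↔ y ∈ T j) := by
    intro x y hxy
    induction hxy with
    | rel x y hxy =>
      obtain ⟨s, rfl⟩ := hxy
      intro j
      constructor
      · intro hx; exact (hsub j).2 x hx s
      · intro hy
        have hx : x ∈ ⋃ i, T i := hcover ▸ Set.mem_univ x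
        obtain ⟨k, hk⟩ := Set.mem_iUnion.mp hx
        have hyk : RAct.act x s ∈ T k := (hsub k).2 x hk s
        by_contra hxj
        have hjk : j ≠ k := fun e => hxj (e ▸ hk)
        have : RAct.act x s ∈ T j ∩ T k := ⟨hy, hyk⟩
        rw [hdisj j k hjk] at this
        exact this
    | refl x => intro j; rfl
    | symm x y _ ih => intro j; exact (ih j).symm
    | trans x y z _ _ ih1 ih2 => intro j; exact (ih1 j).trans (ih2 j)
  exact (key a a' h i).mp ha

/-- Any two elements of an indecomposable subact are connected. -/
lemma mem_conn {Ti : Set A} (hind : IndecompSubact S Ti)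
    {a a' : A} (ha : a ∈ Ti) (ha' : a' ∈ Ti) : Conn S a a' := by
  by_contra hcon
  apply hind.2
  refine ⟨{x | x ∈ Ti ∧ Conn S a x}, {x | x ∈ Ti ∧ ¬ Conn S a x}, ?_, ?_, ?_, ?_⟩
  · refine ⟨⟨a, ha, conn_refl a⟩, ?_⟩
    intro x hx s
    exact ⟨hind.1.2 x hx.1 s, conn_trans hx.2 (conn_act x s)⟩
  · refine ⟨⟨a', ha', hcon⟩, ?_⟩
    intro x hx s
    refine ⟨hind.1.2 x hx.1 s, fun hc => hx.2 ?_⟩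
    exact conn_trans hc (conn_symm (conn_act x s))
  · ext x
    constructor
    · rintro (hx | hx) <;> exact hx.1
    · intro hx
      by_cases hc : Conn S a x
      · exact Or.inl ⟨hx, hc⟩
      · exact Or.inr ⟨hx, hc⟩
  · ext x
    simp only [Set.mem_inter_iff, Set.mem_setOf_eq, Set.mem_empty_iff_false, iff_false]
    rintro ⟨⟨_, h1⟩, ⟨_, h2⟩⟩
    exact h2 h1

end ConnAux

section KeyAux

variable {S : Type u} [Monoid S] {A : Type u} [RAct S A] {I : Type u} {T : I → Set A}

/-- The key lemma: given an iso `e : A ⊕ B ≃ A ⊕ C` of acts, if some `inr b` is sent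
into the copy of `A`, landing in the component `T i`, then `e` sends all of `inl (T i)`
into the copy of `C`. -/
lemma key_lemma {B C : Type u} [RAct S B] [RAct S C]
    (hind : ∀ i, IndecompSubact S (T i))
    (hdisj : ∀ i j, i ≠ j → T i ∩ T j = ∅)
    (hcover : (⋃ i, T i) = Set.univ)
    (hnoniso : ∀ i j, i ≠ j → ¬ SubactIso (hind i).1 (hind j).1)
    (e : A ⊕ B ≃ A ⊕ C)
    (he : ∀ (x : A ⊕ B) (s : S), e (RAct.act x s) = RAct.act (e x) s)
    {b : B} {a : A} (hb : e (Sum.inr b) = Sum.inl a)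
    {a' : A} (hconn : Conn S a a') : ∃ c : C, e (Sum.inl a') = Sum.inr c := by
  have he' : ∀ (y : A ⊕ C) (s : S), e.symm (RAct.act y s) = RAct.act (e.symm y) s := by
    intro y s
    apply e.injective
    rw [Equiv.apply_symm_apply, he, Equiv.apply_symm_apply]
  rcases h : e (Sum.inl a') with a'' | c
  swap
  · exact ⟨c, rfl⟩
  exfalso
  -- a ∈ T i for some i; a' ∈ T i as well
  have hamem : a ∈ ⋃ i, T i := hcover ▸ Set.mem_univ a
  obtain ⟨i, hai⟩ := Set.mem_iUnion.mp hamem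
  have ha'i : a' ∈ T i := conn_mem (fun k => (hind k).1) hdisj hcover hconn hai
  have ha''mem : a'' ∈ ⋃ i, T i := hcover ▸ Set.mem_univ a''
  obtain ⟨j, haj⟩ := Set.mem_iUnion.mp ha''mem
  by_cases hij : i = j
  · -- then `a` and `a''` are connected, so `inr b` and `inl a'` would be connected
    subst hij
    have h1 : Conn S a a'' := mem_conn (hind i) hai haj
    have h2 : Conn S (Sum.inl a : A ⊕ C) (Sum.inl a'') := conn_inl h1
    rw [← hb, ← h] at h2
    have h3 : Conn S (Sum.inr b : A ⊕ B) (Sum.inl a') := by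
      have := conn_map e.symm he' h2
      rwa [Equiv.symm_apply_apply, Equiv.symm_apply_apply] at this
    rcases conn_sum h3 with ⟨_, _, hx, _, _⟩ | ⟨_, _, _, hy, _⟩
    · exact absurd hx (by simp)
    · exact absurd hy (by simp)
  · -- then `e` induces an isomorphism `T i ≅ T j`, contradiction
    apply hnoniso i j hij
    -- forward: every t ∈ T i is sent by e to inl of some u ∈ T j
    have hfwd : ∀ t : A, t ∈ T i → ∃ u, u ∈ T j ∧ e (Sum.inl t) = Sum.inl u := by
      intro t ht
      have hc : Conn S a' t := mem_conn (hind i) ha'i ht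
      have hc2 : Conn S (Sum.inl a' : A ⊕ B) (Sum.inl t) := conn_inl hc
      have hc3 : Conn S (e (Sum.inl a')) (e (Sum.inl t)) := conn_map e he hc2
      rw [h] at hc3
      rcases conn_sum hc3 with ⟨x, x', hx, hx', hcx⟩ | ⟨y, y', hy, _, _⟩
      · obtain rfl : a'' = x := Sum.inl.inj hx
        exact ⟨x', conn_mem (fun k => (hind k).1) hdisj hcover hcx haj, hx'⟩
      · exact absurd hy (by simp)
    have hbwd : ∀ u : A, u ∈ T j → ∃ t, t ∈ T i ∧ e.symm (Sum.inl u) = Sum.inl t := by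
      intro u hu
      have hc : Conn S a'' u := mem_conn (hind j) haj hu
      have hc2 : Conn S (Sum.inl a'' : A ⊕ C) (Sum.inl u) := conn_inl hc
      have hc3 : Conn S (e.symm (Sum.inl a'')) (e.symm (Sum.inl u)) :=
        conn_map e.symm he' hc2
      rw [← h, Equiv.symm_apply_apply] at hc3
      rcases conn_sum hc3 with ⟨x, x', hx, hx', hcx⟩ | ⟨y, y', hy, _, _⟩
      · obtain rfl : a' = x := Sum.inl.inj hx
        exact ⟨x', conn_mem (fun k => (hind k).1) hdisj hcover hcx ha'i, hx'⟩
      · exact absurd hy (by simp)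
    classical
    refine ⟨⟨fun t => ⟨(hfwd t.1 t.2).choose, (hfwd t.1 t.2).choose_spec.1⟩,
            fun u => ⟨(hbwd u.1 u.2).choose, (hbwd u.1 u.2).choose_spec.1⟩, ?_, ?_⟩, ?_⟩
    · -- left inverse
      rintro ⟨t, ht⟩
      apply Subtype.ext
      have h1 := (hfwd t ht).choose_spec.2
      have h2 := (hbwd _ (hfwd t ht).choose_spec.1).choose_spec.2
      have h4 : e.symm (Sum.inl (hfwd t ht).choose) = Sum.inl t := by
        rw [← h1, Equiv.symm_apply_apply]
      exact Sum.inl.inj (h2.symm.trans h4)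
    · -- right inverse
      rintro ⟨u, hu⟩
      apply Subtype.ext
      have h1 := (hbwd u hu).choose_spec.2
      have h2 := (hfwd _ (hbwd u hu).choose_spec.1).choose_spec.2
      have h4 : e (Sum.inl (hbwd u hu).choose) = Sum.inl u := by
        rw [← h1, Equiv.apply_symm_apply]
      exact Sum.inl.inj (h2.symm.trans h4)
    · -- action preserving
      rintro ⟨t, ht⟩ s
      apply Subtype.ext
      have h1 := (hfwd t ht).choose_spec.2
      have h2 := (hfwd (RAct.act t s) ((hind i).1.2 t ht s)).choose_spec.2
      have h3 : e (Sum.inl (RAct.act t s)) =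
          Sum.inl (RAct.act (hfwd t ht).choose s) :=
        (congrArg e (act_inl (B := B) t s).symm).trans
          ((he _ s).trans ((congrArg (fun x => RAct.act x s) h1).trans (act_inl _ s)))
      exact Sum.inl.inj (h2.symm.trans h3)

end KeyAux

/-- If `A` decomposes into infinitely many pairwise non-isomorphic
indecomposable subacts, then `A` is cancellable. -/
theorem infinite_pairwise_nonIso_cancellable (S : Type u) [Monoid S] (A : Type u)
    [RAct S A] [Nonempty A] (I : Type u) [Infinite I] (T : I → Set A)
    (hind : ∀ i, IndecompSubact S (T i))
    (hdisj : ∀ i j, i ≠ j → T i ∩ T j = ∅)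
    (hcover : (⋃ i, T i) = Set.univ)
    (hnoniso : ∀ i j, i ≠ j → ¬ SubactIso (hind i).1 (hind j).1) :
    Cancellable S A := by
  classical
  rintro B C _ _ _ _ ⟨e, he⟩
  have he' : ∀ (y : A ⊕ C) (s : S), e.symm (RAct.act y s) = RAct.act (e.symm y) s := by
    intro y s
    apply e.injective
    rw [Equiv.apply_symm_apply, he, Equiv.apply_symm_apply]
  have hnoniso' : ∀ i j, i ≠ j → ¬ SubactIso (hind i).1 (hind j).1 := hnoniso
  -- the relation defining the cancellation bijection
  set R : B → C → Prop := fun b c =>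
    e (Sum.inr b) = Sum.inr c ∨
      ∃ a : A, e (Sum.inr b) = Sum.inl a ∧ e (Sum.inl a) = Sum.inr c with hR
  set R' : C → B → Prop := fun c b =>
    e.symm (Sum.inr c) = Sum.inr b ∨
      ∃ a : A, e.symm (Sum.inr c) = Sum.inl a ∧ e.symm (Sum.inl a) = Sum.inr b with hR'
  -- totality of R
  have hRtot : ∀ b : B, ∃ c : C, R b c := by
    intro b
    rcases h : e (Sum.inr b) with a | c
    · obtain ⟨c, hc⟩ := key_lemma hind hdisj hcover hnoniso e he h (conn_refl a)
      exact ⟨c, Or.inr ⟨a, h, hc⟩⟩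
    · exact ⟨c, Or.inl h⟩
  -- totality of R'
  have hR'tot : ∀ c : C, ∃ b : B, R' c b := by
    intro c
    rcases h : e.symm (Sum.inr c) with a | b
    · obtain ⟨b, hb⟩ := key_lemma hind hdisj hcover hnoniso e.symm he' h (conn_refl a)
      exact ⟨b, Or.inr ⟨a, h, hb⟩⟩
    · exact ⟨b, Or.inl h⟩
  -- R into R'
  have hRR' : ∀ b c, R b c → R' c b := by
    rintro b c (h | ⟨a, h1, h2⟩)
    · exact Or.inl (by rw [← h, Equiv.symm_apply_apply])
    · exact Or.inr ⟨a, by rw [← h2, Equiv.symm_apply_apply],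
        by rw [← h1, Equiv.symm_apply_apply]⟩
  -- R' into R
  have hR'R : ∀ c b, R' c b → R b c := by
    rintro c b (h | ⟨a, h1, h2⟩)
    · exact Or.inl (by rw [← h, Equiv.apply_symm_apply])
    · exact Or.inr ⟨a, by rw [← h2, Equiv.apply_symm_apply],
        by rw [← h1, Equiv.apply_symm_apply]⟩
  -- R is functional in c
  have hRfun : ∀ b c c', R b c → R b c' → c = c' := by
    rintro b c c' (h | ⟨a, h1, h2⟩) (h' | ⟨a', h1', h2'⟩)
    · exact Sum.inr.inj (h ▸ h')
    · exact absurd (h ▸ h1') (by simp)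
    · exact absurd (h' ▸ h1) (by simp)
    · obtain rfl : a = a' := Sum.inl.inj (h1 ▸ h1')
      exact Sum.inr.inj (h2 ▸ h2')
  -- R' is functional in b
  have hR'fun : ∀ c b b', R' c b → R' c b' → b = b' := by
    rintro c b b' (h | ⟨a, h1, h2⟩) (h' | ⟨a', h1', h2'⟩)
    · exact Sum.inr.inj (h ▸ h')
    · exact absurd (h ▸ h1') (by simp)
    · exact absurd (h' ▸ h1) (by simp)
    · obtain rfl : a = a' := Sum.inl.inj (h1 ▸ h1')
      exact Sum.inr.inj (h2 ▸ h2')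
  set f : B → C := fun b => (hRtot b).choose with hf
  set g : C → B := fun c => (hR'tot c).choose with hg
  have hfspec : ∀ b, R b (f b) := fun b => (hRtot b).choose_spec
  have hgspec : ∀ c, R' c (g c) := fun c => (hR'tot c).choose_spec
  refine ⟨⟨f, g, ?_, ?_⟩, ?_⟩
  · intro b
    exact hR'fun (f b) (g (f b)) b (hgspec (f b)) (hRR' b (f b) (hfspec b))
  · intro c
    exact hRfun (g c) (f (g c)) c (hfspec (g c)) (hR'R c (g c) (hgspec c))
  · intro b s
    show f (RAct.act b s) = RAct.act (f b) s
    apply hRfun (RAct.act b s) _ _ (hfspec (RAct.act b s))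
    rcases hfspec b with h | ⟨a, h1, h2⟩
    · refine Or.inl ?_
      rw [← act_inr (A := A), he, h]
      rfl
    · refine Or.inr ⟨RAct.act a s, ?_, ?_⟩
      · rw [← act_inr (A := A), he, h1]; rfl
      · rw [← act_inl (B := B), he, h2]; rfl
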